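/- arXiv:1603.04948 — 2 statements merged into one kernel-verified Lean document; each statement's English description precedes it below -/
import Mathlib

section
/- Let A be a finite set of nonzero reals. Then there exists a nonzero real z such that ∑_{x ∈ zA} |zA ∩ x(zA)| ≫ E×(A)/|A|, i.e. the sum is at least c · E×(A)/|A| for an absolute constant c > 0. -/
open Finset Pointwise

/-- Multiplicative energy of a finite set of reals. -/
noncomputable def mulE (A : Finset ℝ) : ℕ :=
  (((A ×ˢ A) ×ˢ (A ×ˢ A)).filter fun p => p.1.1 * p.1.2 = p.2.1 * p.2.2).card

lemma card_inter_smul_aux (A : Finset ℝ) {s : ℝ} (hs : s ≠ 0) :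
    (A ∩ s • A).card = (A.filter fun d => s * d ∈ A).card := by
  have : A ∩ s • A = (A.filter fun d => s * d ∈ A).image (s * ·) := by
    ext c
    simp only [mem_inter, mem_image, mem_filter, Finset.mem_smul_finset, smul_eq_mul]
    constructor
    · rintro ⟨hcA, d, hdA, rfl⟩; exact ⟨d, ⟨hdA, hcA⟩, rfl⟩
    · rintro ⟨d, ⟨hdA, hsd⟩, rfl⟩; exact ⟨hsd, d, hdA, rfl⟩
  rw [this, Finset.card_image_of_injective _ (mul_right_injective₀ hs)]

lemma key_sum_aux (A : Finset ℝ) (h0 : (0:ℝ) ∉ A) :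
    ∑ b ∈ A, ∑ a ∈ A, (A.filter fun d => a * b⁻¹ * d ∈ A).card = mulE A := by
  have hne : ∀ b ∈ A, b ≠ 0 := fun b hb => fun h => h0 (h ▸ hb)
  rw [mulE, Finset.card_filter, Finset.sum_product]
  simp only [Finset.sum_product, Finset.card_filter]
  rw [Finset.sum_comm]
  refine Finset.sum_congr rfl fun a ha => ?_
  rw [Finset.sum_comm]
  refine Finset.sum_congr rfl fun d hd => ?_
  refine Finset.sum_congr rfl fun b hb => ?_
  have hb0 := hne b hb
  have hcond : ∀ r : ℝ, (a * d = b * r) ↔ (r = b⁻¹ * (a * d)) := fun r => by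
    rw [eq_inv_mul_iff_mul_eq₀ hb0]; exact eq_comm
  have h1 : a * b⁻¹ * d = b⁻¹ * (a * d) := by ring
  calc (if a * b⁻¹ * d ∈ A then 1 else 0)
      = (if b⁻¹ * (a * d) ∈ A then 1 else 0) := by rw [h1]
    _ = ∑ r ∈ A, if r = b⁻¹ * (a * d) then 1 else 0 := (Finset.sum_ite_eq' A _ fun _ => 1).symm
    _ = ∑ r ∈ A, if a * d = b * r then 1 else 0 :=
        Finset.sum_congr rfl fun r _ => if_congr (hcond r).symm rfl rfl

lemma card_smul_aux {z : ℝ} (hz : z ≠ 0) (S : Finset ℝ) : (z • S).card = S.card :=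
  Finset.card_smul_finset (Units.mk0 z hz) S ▸ rfl

theorem exists_shift_sum_ge :
    ∃ c : ℝ, 0 < c ∧ ∀ A : Finset ℝ, (0 : ℝ) ∉ A →
      ∃ z : ℝ, z ≠ 0 ∧
        c * (mulE A : ℝ) / A.card ≤ ∑ x ∈ z • A, ((z • A) ∩ x • (z • A)).card := by
  refine ⟨1, one_pos, fun A h0 => ?_⟩
  rcases A.eq_empty_or_nonempty with rfl | hA
  · refine ⟨1, one_ne_zero, ?_⟩
    simp [mulE]
  have hne : ∀ b ∈ A, b ≠ 0 := fun b hb => fun h => h0 (h ▸ hb)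
  -- pick b maximizing the inner sum
  set f : ℝ → ℕ := fun b => ∑ a ∈ A, (A.filter fun d => a * b⁻¹ * d ∈ A).card with hf
  obtain ⟨b, hb, hbmax⟩ := A.exists_max_image f hA
  have hb0 : b ≠ 0 := hne b hb
  have hsum : ∑ b' ∈ A, f b' = mulE A := key_sum_aux A h0
  have havg : (mulE A : ℕ) ≤ A.card * f b := by
    calc mulE A = ∑ b' ∈ A, f b' := hsum.symm
      _ ≤ ∑ _b' ∈ A, f b := Finset.sum_le_sum fun b' hb' => hbmax b' hb'
      _ = A.card * f b := by rw [Finset.sum_const, smul_eq_mul]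
  refine ⟨b⁻¹, inv_ne_zero hb0, ?_⟩
  set z : ℝ := b⁻¹ with hzdef
  have hz : z ≠ 0 := inv_ne_zero hb0
  -- rewrite the RHS sum
  have himg : z • A = A.image (z * ·) := by
    ext x; simp [Finset.mem_smul_finset, smul_eq_mul, eq_comm]
  have hterm : ∀ a ∈ A, ((z • A) ∩ (z * a) • (z • A)).card
      = (A.filter fun d => a * b⁻¹ * d ∈ A).card := by
    intro a ha
    have ha0 : a ≠ 0 := hne a ha
    have h1 : (z * a) • (z • A) = z • ((a * z) • A) := by
      rw [smul_smul, smul_smul]; ring_nf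
    have h2 : (z • A) ∩ (z * a) • (z • A) = z • (A ∩ (a * z) • A) := by
      rw [h1, Finset.smul_finset_inter₀ hz]
    rw [h2, card_smul_aux hz, card_inter_smul_aux A (mul_ne_zero ha0 hz)]
  have hRHS : ∑ x ∈ z • A, ((z • A) ∩ x • (z • A)).card = f b := by
    rw [himg, Finset.sum_image (fun x _ y _ h => mul_left_cancel₀ hz h)]
    exact Finset.sum_congr rfl hterm
  have hcardpos : (0:ℝ) < A.card := by exact_mod_cast Finset.card_pos.mpr hA
  rw [one_mul, div_le_iff₀ hcardpos]
  push_cast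
  calc (mulE A : ℝ) ≤ (A.card : ℝ) * f b := by exact_mod_cast havg
    _ = (∑ x ∈ z • A, (((z • A) ∩ x • (z • A)).card : ℝ)) * A.card := by
        rw [mul_comm]; norm_cast; rw [hRHS]
end

section
/- For finite sets A, B of reals, T(A,B,B) = ∑_{a₁,a₂ ∈ A} E×(B − a₁, B − a₂), where T(A,B,B) counts collinear triples with one point in A×A and two points in B×B (counted appropriately, including degenerate triples). -/
open Finset

/-- Three points of the plane are collinear. -/
def Col (p q r : ℝ × ℝ) : Prop :=
  (q.1 - p.1) * (r.2 - p.2) = (r.1 - p.1) * (q.2 - p.2)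

noncomputable instance : ∀ p q r : ℝ × ℝ, Decidable (Col p q r) :=
  fun _ _ _ => Classical.dec _

/-- The number of collinear triples with one point in `A × A`, one in `B × B`
and one in `C × C`. -/
noncomputable def T3 (A B C : Finset ℝ) : ℕ :=
  ((((A ×ˢ A) ×ˢ (B ×ˢ B)) ×ˢ (C ×ˢ C)).filter fun p : ((ℝ × ℝ) × (ℝ × ℝ)) × (ℝ × ℝ) =>
    Col p.1.1 p.1.2 p.2).card

/-- Multiplicative energy of two finite sets of reals. -/
noncomputable def mulE2 (X Y : Finset ℝ) : ℕ :=
  (((X ×ˢ Y) ×ˢ (X ×ˢ Y)).filter fun p => p.1.1 * p.1.2 = p.2.1 * p.2.2).card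

lemma inner_eq (a₁ a₂ : ℝ) (B : Finset ℝ) :
    (((B ×ˢ B) ×ˢ (B ×ˢ B)).filter fun p : (ℝ × ℝ) × (ℝ × ℝ) =>
      Col (a₁, a₂) p.1 p.2).card
    = mulE2 (B.image fun b => b - a₁) (B.image fun b => b - a₂) := by
  unfold mulE2
  apply Finset.card_bij'
    (i := fun p _ => ((p.1.1 - a₁, p.2.2 - a₂), (p.2.1 - a₁, p.1.2 - a₂)))
    (j := fun q _ => ((q.1.1 + a₁, q.2.2 + a₂), (q.2.1 + a₁, q.1.2 + a₂)))
  · intro p hp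
    simp only [mem_filter, mem_product] at hp ⊢
    obtain ⟨⟨⟨hb₁, hb₂⟩, hc₁, hc₂⟩, hcol⟩ := hp
    refine ⟨⟨⟨?_, ?_⟩, ?_, ?_⟩, ?_⟩
    · exact mem_image.2 ⟨_, hb₁, rfl⟩
    · exact mem_image.2 ⟨_, hc₂, rfl⟩
    · exact mem_image.2 ⟨_, hc₁, rfl⟩
    · exact mem_image.2 ⟨_, hb₂, rfl⟩
    · simpa [Col] using hcol
  · intro q hq
    simp only [mem_filter, mem_product, mem_image] at hq ⊢
    obtain ⟨⟨⟨⟨x, hx, hx'⟩, ⟨y, hy, hy'⟩⟩, ⟨z, hz, hz'⟩, ⟨w, hw, hw'⟩⟩, heq⟩ := hq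
    rw [← hx', ← hy', ← hz', ← hw'] at heq ⊢
    refine ⟨⟨⟨by simpa using hx, by simpa using hw⟩, by simpa using hz, by simpa using hy⟩, ?_⟩
    simp only [Col]
    ring_nf
    ring_nf at heq
    linarith
  · intro p _; simp [Prod.ext_iff]
  · intro q _; simp [Prod.ext_iff]

theorem T3_eq_sum_mulE2 (A B : Finset ℝ) :
    T3 A B B = ∑ a₁ ∈ A, ∑ a₂ ∈ A,
      mulE2 (B.image fun b => b - a₁) (B.image fun b => b - a₂) := by
  unfold T3
  rw [Finset.card_filter, Finset.sum_product, Finset.sum_product,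
    Finset.sum_product (s := A) (t := A)]
  refine Finset.sum_congr rfl fun a₁ _ => Finset.sum_congr rfl fun a₂ _ => ?_
  rw [← inner_eq a₁ a₂ B, Finset.card_filter]
  conv_rhs => rw [Finset.sum_product, Finset.sum_product]
  rw [Finset.sum_product]
end
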